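/- For L-structures N and M', an embedding f : N → M' preserves all existential formulas; moreover, f preserves all universal formulas if and only if f preserves all ∃∀-formulas. -/

import Mathlib

/-!
Quantifier-free formulas are preserved (and reflected) by an embedding, and an existential
quantifier is preserved by any map, since the image of a witness is a witness. Hence an embedding
preserving all `Π_k`-formulas preserves all `Σ_(k+1)`-formulas: with `k = 0` this gives the
existential case, with `k = 1` the nontrivial direction of the equivalence; the other direction
holds because every universal formula is an `∃∀`-formula. Along the way bound variables are turned
into free ones with `BoundedFormula.toFormula`, which keeps the quantifier class.
-/

open FirstOrder Language

universe u v w x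

/-- `IsQN true k φ` says that `φ` is a `Σ_k`-formula and `IsQN false k φ` says that `φ` is a
`Π_k`-formula.  In particular `IsQN true 1` captures existential formulas, `IsQN false 1`
universal formulas, and `IsQN true 2` the `∃∀`-formulas. -/
inductive IsQN {L : FirstOrder.Language} {α : Type*} :
    Bool → ℕ → {n : ℕ} → L.BoundedFormula α n → Prop
  | of_isQF {b k n} {φ : L.BoundedFormula α n} : φ.IsQF → IsQN b k φ
  | of_flip {b k n} {φ : L.BoundedFormula α n} : IsQN (!b) k φ → IsQN b (k + 1) φ
  | ex {k n} {φ : L.BoundedFormula α (n + 1)} : IsQN true (k + 1) φ → IsQN true (k + 1) φ.ex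
  | all {k n} {φ : L.BoundedFormula α (n + 1)} : IsQN false (k + 1) φ → IsQN false (k + 1) φ.all

namespace FirstOrder.Language.BoundedFormula

variable {L : Language} {α : Type*} {n : ℕ}

theorem IsQF.toFormula {φ : L.BoundedFormula α n} (h : φ.IsQF) : φ.toFormula.IsQF := by
  induction h with
  | falsum => exact isQF_bot
  | of_isAtomic h =>
    cases h with
    | equal => exact (IsAtomic.equal _ _).isQF
    | rel => exact (IsAtomic.rel _ _).isQF
  | imp _ _ ih₁ ih₂ => exact ih₁.imp ih₂

variable {M N : Type*} [L.Structure M] [L.Structure N]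

def PreservedBy (φ : L.BoundedFormula α n) (f : M → N) : Prop :=
  ∀ (v : α → M) (xs : Fin n → M), φ.Realize v xs → φ.Realize (f ∘ v) (f ∘ xs)

theorem IsQF.preservedBy {φ : L.BoundedFormula α n} (h : φ.IsQF) (f : M ↪[L] N) :
    φ.PreservedBy f :=
  fun _ _ => (h.realize_embedding f).2

theorem PreservedBy.ex {φ : L.BoundedFormula α (n + 1)} {f : M → N} (h : φ.PreservedBy f) :
    φ.ex.PreservedBy f := by
  intro v xs hφ
  obtain ⟨a, ha⟩ := realize_ex.1 hφ
  refine realize_ex.2 ⟨f a, ?_⟩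
  rw [← Fin.comp_snoc]
  exact h v _ ha

end FirstOrder.Language.BoundedFormula

namespace FirstOrder.Language.Formula

variable {L : Language} {α β : Type*} {M N : Type*} [L.Structure M] [L.Structure N]

theorem preservedBy_iff {φ : L.Formula α} {f : M → N} :
    φ.PreservedBy f ↔ ∀ v : α → M, φ.Realize v → φ.Realize (f ∘ v) := by
  refine ⟨fun h v hφ => ?_, fun h v xs hφ => ?_⟩
  · simpa [Formula.Realize, Subsingleton.elim (f ∘ default) default] using h v default hφ
  rw [Subsingleton.elim (f ∘ xs) default]
  exact h v (by rwa [Subsingleton.elim xs default] at hφ)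

theorem preservedBy_of_relabel {φ : L.Formula α} {f : M → N} (e : α ≃ β)
    (h : (φ.relabel e).PreservedBy f) : φ.PreservedBy f := by
  rw [preservedBy_iff] at h ⊢
  intro v hφ
  have := h (v ∘ e.symm) (by simpa [realize_relabel, Function.comp_assoc] using hφ)
  simpa [realize_relabel, Function.comp_assoc] using this

end FirstOrder.Language.Formula

namespace FirstOrder.Language.BoundedFormula

variable {L : Language} {α : Type*} {n : ℕ} {M N : Type*} [L.Structure M] [L.Structure N]

theorem PreservedBy.of_toFormula {φ : L.BoundedFormula α n} {f : M → N}
    (h : φ.toFormula.PreservedBy f) : φ.PreservedBy f := by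
  intro v xs hφ
  have := Formula.preservedBy_iff.1 h (Sum.elim v xs) (by simpa using hφ)
  rwa [realize_toFormula, Function.comp_assoc, Function.comp_assoc, Sum.elim_comp_inl,
    Sum.elim_comp_inr] at this

end FirstOrder.Language.BoundedFormula

namespace IsQN

open BoundedFormula

variable {L : Language} {α β : Type*} {b : Bool} {k n : ℕ}

theorem isQF {φ : L.BoundedFormula α n} (h : IsQN b 0 φ) : φ.IsQF := by
  cases h with
  | of_isQF h => exact h

theorem relabel {m : ℕ} (g : α → β ⊕ Fin m) {φ : L.BoundedFormula α n} (h : IsQN b k φ) :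
    IsQN b k (φ.relabel g) := by
  induction h with
  | of_isQF h => exact .of_isQF (h.relabel g)
  | of_flip _ ih => exact .of_flip ih
  | ex _ ih => rw [relabel_ex]; exact .ex ih
  | all _ ih => rw [relabel_all]; exact .all ih

theorem toFormula {φ : L.BoundedFormula α n} (h : IsQN b k φ) : IsQN b k φ.toFormula := by
  induction h with
  | of_isQF h => exact .of_isQF h.toFormula
  | of_flip _ ih => exact .of_flip ih
  | all _ ih => exact .all (ih.relabel _)
  -- `toFormula` of `∃' φ` unfolds definitionally to `∃'` of a relabelling of `φ.toFormula`
  | ex _ ih => exact .ex (ih.relabel _)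

variable {M N : Type*} [L.Structure M] [L.Structure N]

theorem preservedBy_of_forall_pi (f : M ↪[L] N)
    (hpi : ∀ {n} {ψ : L.BoundedFormula α n}, IsQN false k ψ → ψ.PreservedBy f)
    {φ : L.BoundedFormula α n} (hφ : IsQN true (k + 1) φ) : φ.PreservedBy f := by
  suffices ∀ {b k' n} {φ : L.BoundedFormula α n}, IsQN b k' φ → b = true → k' = k + 1 →
      φ.PreservedBy f from this hφ rfl rfl
  intro b k' n φ h
  induction h with
  | of_isQF h => exact fun _ _ => h.preservedBy f
  | of_flip h _ =>
    rintro rfl hk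
    obtain rfl : _ = k := Nat.succ.inj hk
    exact hpi h
  | ex _ ih => exact fun _ hk => (ih rfl hk).ex
  | all _ _ => rintro ⟨⟩

theorem preservedBy_of_forall_formula {f : M → N}
    (h : ∀ (m : ℕ) (φ : L.Formula (Fin m)), IsQN b k φ → ∀ v, φ.Realize v → φ.Realize (f ∘ v))
    {m : ℕ} {φ : L.BoundedFormula (Fin m) n} (hφ : IsQN b k φ) : φ.PreservedBy f :=
  PreservedBy.of_toFormula <| Formula.preservedBy_of_relabel finSumFinEquiv <|
    Formula.preservedBy_iff.2 <| h _ _ (hφ.toFormula.relabel _)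

end IsQN

/-- an embedding `f : N ↪ M'` of `L`-structures preserves all existential formulas;
moreover, `f` preserves all universal formulas if and only if it preserves all `∃∀`-formulas. -/
theorem statement6 (L : FirstOrder.Language.{u, v}) (N : Type w) (M' : Type x)
    [L.Structure N] [L.Structure M'] (f : N ↪[L] M') :
    -- `f` preserves existential formulas:
    (∀ (m : ℕ) (φ : L.Formula (Fin m)), IsQN true 1 φ → ∀ v : Fin m → N,
      Formula.Realize φ v → Formula.Realize φ (f ∘ v)) ∧
    -- `f` preserves universal formulas iff it preserves `∃∀`-formulas:
    ((∀ (m : ℕ) (φ : L.Formula (Fin m)), IsQN false 1 φ → ∀ v : Fin m → N,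
        Formula.Realize φ v → Formula.Realize φ (f ∘ v)) ↔
      (∀ (m : ℕ) (φ : L.Formula (Fin m)), IsQN true 2 φ → ∀ v : Fin m → N,
        Formula.Realize φ v → Formula.Realize φ (f ∘ v))) := by
  have hsigma₁ {m n : ℕ} {φ : L.BoundedFormula (Fin m) n} (hφ : IsQN true 1 φ) : φ.PreservedBy f :=
    IsQN.preservedBy_of_forall_pi f (fun hψ => hψ.isQF.preservedBy f) hφ
  refine ⟨fun m φ hφ => Formula.preservedBy_iff.1 (hsigma₁ hφ), fun hpi₁ m φ hφ => ?_,
    fun hsigma₂ m φ hφ => hsigma₂ m φ (.of_flip (b := true) hφ)⟩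
  exact Formula.preservedBy_iff.1 <|
    IsQN.preservedBy_of_forall_pi f (IsQN.preservedBy_of_forall_formula hpi₁) hφ
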